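/- arXiv:1504.02757 — 6 statements merged into one kernel-verified Lean document; each statement's English description precedes it below -/
import Mathlib

section
/- Let p be an odd prime such that p + 2 is also prime (a twin prime pair), and let n = p(p+2). Then the quotient group G_n^* = (ℤ/nℤ)ˣ / ⟨-1⟩ is cyclic. -/
/-!
By the Chinese remainder theorem `(ℤ/nℤ)ˣ ≅ (ℤ/pℤ)ˣ × (ℤ/(p+2)ℤ)ˣ`, a product of cyclic
groups of orders `2c` and `2(c+1)` where `p = 2c + 1`. A pair `g` of generators has order
`lcm (2c) (2(c+1)) = 2c(c+1)`, half the order of the group. In a cyclic group of order `2m`,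
the `k`-th power of a generator has order two only when `k` is an odd multiple of `m`, so
`k ≡ m (mod 2)`; as `c` and `c + 1` have different parities, no power of `g` is `(-1, -1)`.
Thus `⟨g⟩` meets `⟨-1⟩` trivially, and the image of `g` generates the quotient.
-/

open Subgroup

section Group

variable {G : Type*} [Group G]

theorem orderOf_mk_eq_of_disjoint {H : Subgroup G} [H.Normal] {g : G}
    (h : Disjoint (zpowers g) H) : orderOf (g : G ⧸ H) = orderOf g := by
  refine orderOf_eq_orderOf_iff.mpr fun k => ?_
  rw [← QuotientGroup.mk_pow, QuotientGroup.eq_one_iff]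
  exact ⟨fun hk => (Subgroup.disjoint_def.mp h) (npow_mem_zpowers g k) hk,
    fun hk => hk ▸ H.one_mem⟩

theorem isCyclic_quotient_of_disjoint_zpowers [Finite G] {H : Subgroup G} [H.Normal] {g : G}
    (h : Disjoint (zpowers g) H) (hcard : orderOf g * Nat.card H = Nat.card G) :
    IsCyclic (G ⧸ H) := by
  refine isCyclic_of_orderOf_eq_card (g : G ⧸ H) ?_
  have hH : 0 < Nat.card H := Nat.card_pos
  rw [orderOf_mk_eq_of_disjoint h]
  rw [H.card_eq_card_quotient_mul_card_subgroup] at hcard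
  exact Nat.eq_of_mul_eq_mul_right hH hcard

theorem disjoint_zpowers_of_orderOf_eq_two {g z : G}
    (hz : orderOf z = 2) (hg : z ∉ zpowers g) : Disjoint (zpowers g) (zpowers z) := by
  classical
  have hfin : IsOfFinOrder z := orderOf_pos_iff.mp (by omega)
  refine Subgroup.disjoint_def.mpr fun {x} hxg hxz => ?_
  rw [hfin.mem_zpowers_iff_mem_range_orderOf, hz] at hxz
  simp only [Finset.mem_image, Finset.mem_range] at hxz
  obtain ⟨k, hk, rfl⟩ := hxz
  interval_cases k
  · exact pow_zero z
  · exact absurd (by simpa using hxg) hg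

theorem emod_two_eq_of_orderOf_zpow_eq_two {a : G} {m : ℕ} {k : ℤ}
    (ha : orderOf a = 2 * m) (hk : orderOf (a ^ k) = 2) : k % 2 = m % 2 := by
  have hdvd : ((2 * m : ℕ) : ℤ) ∣ 2 * k := by
    have hsq := pow_orderOf_eq_one (a ^ k)
    rw [hk] at hsq
    rw [← ha, orderOf_dvd_iff_zpow_eq_one, mul_comm, zpow_mul]
    exact_mod_cast hsq
  have hndvd : ¬ ((2 * m : ℕ) : ℤ) ∣ k := by
    rw [← ha, orderOf_dvd_iff_zpow_eq_one]
    intro h1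
    rw [h1, orderOf_one] at hk
    omega
  push_cast at hdvd hndvd
  obtain ⟨j, rfl⟩ : (m : ℤ) ∣ k := (mul_dvd_mul_iff_left two_ne_zero).mp hdvd
  have hj : Odd j := Int.not_even_iff_odd.mp fun ⟨i, hi⟩ => hndvd ⟨i, by rw [hi]; ring⟩
  obtain ⟨i, rfl⟩ := hj
  rw [show (m : ℤ) * (2 * i + 1) = 2 * (m * i) + m by ring]
  omega

end Group

theorem exists_orderOf_eq_and_notMem_zpowers {P Q : Type*} [Group P] [Group Q] [Finite P]
    [Finite Q] [IsCyclic P] [IsCyclic Q] {m : ℕ} (hP : Nat.card P = 2 * m)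
    (hQ : Nat.card Q = 2 * (m + 1)) {x : P} {y : Q} (hx : orderOf x = 2) (hy : orderOf y = 2) :
    ∃ g : P × Q, orderOf g = 2 * (m * (m + 1)) ∧ (x, y) ∉ zpowers g := by
  obtain ⟨a, ha⟩ := IsCyclic.exists_generator (α := P)
  obtain ⟨b, hb⟩ := IsCyclic.exists_generator (α := Q)
  have hoa : orderOf a = 2 * m := (orderOf_eq_card_of_forall_mem_zpowers ha).trans hP
  have hob : orderOf b = 2 * (m + 1) := (orderOf_eq_card_of_forall_mem_zpowers hb).trans hQ
  refine ⟨(a, b), ?_, ?_⟩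
  · rw [Prod.orderOf_mk, hoa, hob, Nat.lcm_mul_left,
      (Nat.coprime_self_add_right.mpr (Nat.coprime_one_right m)).lcm_eq_mul]
  · rintro ⟨k, hk⟩
    simp only [Prod.ext_iff, Prod.pow_fst, Prod.pow_snd] at hk
    have h1 := emod_two_eq_of_orderOf_zpow_eq_two hoa (hk.1 ▸ hx)
    have h2 := emod_two_eq_of_orderOf_zpow_eq_two hob (hk.2 ▸ hy)
    push_cast at h2
    omega

theorem ZMod.orderOf_units_neg_one {n : ℕ} (hn : 2 < n) : orderOf (-1 : (ZMod n)ˣ) = 2 := by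
  have : Fact (1 < n) := ⟨by omega⟩
  rw [← orderOf_units, Units.coe_neg_one, orderOf_neg_one, ZMod.ringChar_zmod_n, if_neg hn.ne']

def ZMod.unitsChineseRemainder {m n : ℕ} (h : m.Coprime n) :
    (ZMod (m * n))ˣ ≃* (ZMod m)ˣ × (ZMod n)ˣ :=
  (Units.mapEquiv (ZMod.chineseRemainder h).toMulEquiv).trans MulEquiv.prodUnits

theorem ZMod.unitsChineseRemainder_neg_one {m n : ℕ} (h : m.Coprime n) :
    ZMod.unitsChineseRemainder h (-1) = (-1, -1) := by
  ext <;> simp [ZMod.unitsChineseRemainder, MulEquiv.prodUnits]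

/-- Let `p` be an odd prime such that `p + 2` is also prime, and `n = p(p+2)`.
Then `(ℤ/nℤ)ˣ / ⟨-1⟩` is cyclic. -/
theorem stmt_8 (p : ℕ) (hp : p.Prime) (hpodd : Odd p) (hp2 : (p + 2).Prime)
    (n : ℕ) (hn : n = p * (p + 2)) :
    IsCyclic ((ZMod n)ˣ ⧸ Subgroup.zpowers (-1 : (ZMod n)ˣ)) := by
  subst hn
  obtain ⟨c, rfl⟩ := hpodd
  have : Fact (2 * c + 1).Prime := ⟨hp⟩
  have : Fact (2 * c + 1 + 2).Prime := ⟨hp2⟩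
  have hc : c ≠ 0 := by rintro rfl; exact Nat.not_prime_one hp
  have hcop : (2 * c + 1).Coprime (2 * c + 1 + 2) := (Nat.coprime_primes hp hp2).mpr (by omega)
  let e := ZMod.unitsChineseRemainder hcop
  have hcardP : Nat.card (ZMod (2 * c + 1))ˣ = 2 * c := by
    rw [Nat.card_eq_fintype_card, ZMod.card_units]; omega
  have hcardQ : Nat.card (ZMod (2 * c + 1 + 2))ˣ = 2 * (c + 1) := by
    rw [Nat.card_eq_fintype_card, ZMod.card_units]; omega
  obtain ⟨g, hg, hgneg⟩ := exists_orderOf_eq_and_notMem_zpowers hcardP hcardQ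
    (ZMod.orderOf_units_neg_one (by omega)) (ZMod.orderOf_units_neg_one (by omega))
  have hneg : (-1 : (ZMod ((2 * c + 1) * (2 * c + 1 + 2)))ˣ) ∉ zpowers (e.symm g) := by
    rintro ⟨k, hk⟩
    refine hgneg ⟨k, ?_⟩
    rw [← ZMod.unitsChineseRemainder_neg_one hcop, ← hk, map_zpow, e.apply_symm_apply]
  have hneg_order :=
    ZMod.orderOf_units_neg_one (n := (2 * c + 1) * (2 * c + 1 + 2)) (by nlinarith)
  refine isCyclic_quotient_of_disjoint_zpowers
    (disjoint_zpowers_of_orderOf_eq_two hneg_order hneg) ?_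
  rw [MulEquiv.orderOf_eq, hg, Nat.card_zpowers, hneg_order, Nat.card_congr e.toEquiv,
    Nat.card_prod, hcardP, hcardQ]
  ring
end

section
/- Let n = p^α be a power of an odd prime such that 4 divides φ(n) and φ(n)/4 is odd. Let b be an integer coprime to n which is a quadratic residue modulo* n, i.e., b ≡ c² (mod n) or b ≡ -c² (mod n) for some integer c. Then x = b^{(φ(n)/4 + 1)/2} satisfies x² ≡ b (mod n) or x² ≡ -b (mod n). -/
/-!
Write `m = φ(n)/4`. From `b ≡ ±c²` we get `b² ≡ c⁴`, hence `(b^m)² = b^(2m) ≡ c^φ(n) ≡ 1`.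
Modulo a power of an odd prime the only square roots of unity are `±1` (the factors `x - 1`,
`x + 1` differ by `2`, so `p` divides at most one of them), so `b^m ≡ ±1`. As `m` is odd,
`(b^((m+1)/2))² = b^m · b ≡ ±b`.
-/

open Nat

theorem Int.prime_pow_dvd_sub_one_or_dvd_add_one {p : ℕ} (hp : p.Prime) (hpodd : Odd p) (α : ℕ)
    {x : ℤ} (h : (p : ℤ) ^ α ∣ (x - 1) * (x + 1)) :
    (p : ℤ) ^ α ∣ x - 1 ∨ (p : ℤ) ^ α ∣ x + 1 := by
  have hpi : Prime (p : ℤ) := Nat.prime_iff_prime_int.mp hp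
  by_cases hsub : (p : ℤ) ∣ x - 1
  · have hadd : ¬(p : ℤ) ∣ x + 1 := fun hadd => by
      have h2 : (p : ℤ) ∣ 2 := by simpa using dvd_sub hadd hsub
      have hp2 : p = 2 := (Nat.prime_dvd_prime_iff_eq hp Nat.prime_two).mp (by exact_mod_cast h2)
      exact (Nat.not_even_iff_odd.mpr hpodd) (hp2 ▸ even_two)
    exact .inl ((hpi.coprime_iff_not_dvd.mpr hadd).pow_left.dvd_of_dvd_mul_right h)
  · exact .inr ((hpi.coprime_iff_not_dvd.mpr hsub).pow_left.dvd_of_dvd_mul_left h)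

theorem ZMod.eq_one_or_eq_neg_one_of_sq_eq_one {p : ℕ} (hp : p.Prime) (hpodd : Odd p) (α : ℕ)
    {x : ZMod (p ^ α)} (hx : x ^ 2 = 1) : x = 1 ∨ x = -1 := by
  obtain ⟨k, rfl⟩ := ZMod.intCast_surjective x
  have hdvd : (p : ℤ) ^ α ∣ (k - 1) * (k + 1) := by
    rw [← Nat.cast_pow, ← ZMod.intCast_zmod_eq_zero_iff_dvd]
    push_cast
    linear_combination hx
  refine (Int.prime_pow_dvd_sub_one_or_dvd_add_one hp hpodd α hdvd).imp
    (fun h => ?_) (fun h => ?_) <;>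
  · rw [← Nat.cast_pow, ← ZMod.intCast_zmod_eq_zero_iff_dvd] at h
    push_cast at h
    linear_combination h

theorem pow_succ_div_two_sq {M : Type*} [Monoid M] (x : M) {m : ℕ} (hm : Odd m) :
    (x ^ ((m + 1) / 2)) ^ 2 = x ^ m * x := by
  obtain ⟨k, rfl⟩ := hm
  rw [← pow_succ, ← pow_mul]
  congr 1
  omega

theorem ZMod.pow_totient_of_isUnit {n : ℕ} {y : ZMod n} (hy : IsUnit y) : y ^ φ n = 1 := by
  rw [← hy.unit_spec, ← Units.val_pow_eq_pow_val, ZMod.pow_totient, Units.val_one]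

theorem ZMod.sq_pow_succ_div_two_eq_or_eq_neg {n : ℕ}
    (hsqrt : ∀ z : ZMod n, z ^ 2 = 1 → z = 1 ∨ z = -1)
    {m : ℕ} (hm : 4 * m = φ n) (hodd : Odd m) {x y : ZMod n} (hx : IsUnit x)
    (hxy : x = y ^ 2 ∨ x = -y ^ 2) :
    (x ^ ((m + 1) / 2)) ^ 2 = x ∨ (x ^ ((m + 1) / 2)) ^ 2 = -x := by
  have hy : IsUnit y := by
    rcases hxy with rfl | rfl
    · exact (isUnit_pow_iff two_ne_zero).mp hx
    · exact (isUnit_pow_iff two_ne_zero).mp ((IsUnit.neg_iff _).mp hx)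
  have hx2 : x ^ 2 = y ^ 4 := by rcases hxy with rfl | rfl <;> ring
  have hxm : (x ^ m) ^ 2 = 1 := by
    rw [← pow_mul, mul_comm, pow_mul, hx2, ← pow_mul, hm, ZMod.pow_totient_of_isUnit hy]
  rw [pow_succ_div_two_sq x hodd]
  rcases hsqrt _ hxm with h | h
  · exact .inl (by rw [h, one_mul])
  · exact .inr (by rw [h, neg_one_mul])

theorem stmt_12_general (p α : ℕ) (hp : p.Prime) (hpodd : Odd p)
    (n : ℕ) (hn : n = p ^ α) (hdvd : 4 ∣ n.totient) (hodd : Odd (n.totient / 4))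
    (b : ℤ) (hb : IsCoprime b (n : ℤ))
    (hqr : ∃ c : ℤ, b ≡ c ^ 2 [ZMOD (n : ℤ)] ∨ b ≡ -c ^ 2 [ZMOD (n : ℤ)]) :
    (b ^ ((n.totient / 4 + 1) / 2)) ^ 2 ≡ b [ZMOD (n : ℤ)] ∨
      (b ^ ((n.totient / 4 + 1) / 2)) ^ 2 ≡ -b [ZMOD (n : ℤ)] := by
  obtain ⟨c, hc⟩ := hqr
  have hsqrt : ∀ z : ZMod n, z ^ 2 = 1 → z = 1 ∨ z = -1 := by
    subst hn
    exact fun z => ZMod.eq_one_or_eq_neg_one_of_sq_eq_one hp hpodd α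
  have hunit : IsUnit (b : ZMod n) := (ZMod.coe_int_isUnit_iff_isCoprime b n).mpr hb.symm
  simp only [← ZMod.intCast_eq_intCast_iff] at hc ⊢
  push_cast at hc ⊢
  exact ZMod.sq_pow_succ_div_two_eq_or_eq_neg hsqrt (Nat.mul_div_cancel' hdvd) hodd hunit hc

/-- Let `n = p^α` (p an odd prime, α ≥ 1) with `4 ∣ φ(n)` and `φ(n)/4` odd. Let `b` be
coprime to `n` and a quadratic residue modulo* `n`. Then `x = b^((φ(n)/4 + 1)/2)`
satisfies `x² ≡ b (mod n)` or `x² ≡ -b (mod n)`. -/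
theorem stmt_12 (p α : ℕ) (hp : p.Prime) (hpodd : Odd p) (hα : 0 < α)
    (n : ℕ) (hn : n = p ^ α) (hdvd : 4 ∣ n.totient) (hodd : Odd (n.totient / 4))
    (b : ℤ) (hb : IsCoprime b (n : ℤ))
    (hqr : ∃ c : ℤ, b ≡ c ^ 2 [ZMOD (n : ℤ)] ∨ b ≡ -c ^ 2 [ZMOD (n : ℤ)]) :
    (b ^ ((n.totient / 4 + 1) / 2)) ^ 2 ≡ b [ZMOD (n : ℤ)] ∨
      (b ^ ((n.totient / 4 + 1) / 2)) ^ 2 ≡ -b [ZMOD (n : ℤ)] :=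
  stmt_12_general p α hp hpodd n hn hdvd hodd b hb hqr
end

section
/- Let n = p^α be a power of an odd prime such that 8 divides φ(n) and φ(n)/8 is odd. Let b be an integer coprime to n which is a biquadratic residue modulo* n, i.e., b ≡ c⁴ (mod n) or b ≡ -c⁴ (mod n) for some integer c. Then x = b^{(φ(n)/8 + 1)/2} satisfies x² ≡ b (mod n) or x² ≡ -b (mod n). -/
/-!
Write `φ(p^α) = 8m` with `m` odd. For `c` coprime to `p^α`, Euler's theorem makes `c^(4m)` a
square root of `1` modulo `p^α`, and for odd `p` the only such roots are `±1`, because `p` cannot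
divide both `t - 1` and `t + 1`. As `m` is odd, `b^m ≡ (±c^4)^m = ±c^(4m) ≡ ±1`, and
`x^2 = b^(m+1) = b^m b ≡ ±b`.
-/

theorem Int.ModEq.isCoprime_iff {a b n : ℤ} (h : a ≡ b [ZMOD n]) :
    IsCoprime a n ↔ IsCoprime b n := by
  rw [Int.isCoprime_iff_gcd_eq_one, Int.isCoprime_iff_gcd_eq_one, ← Int.gcd_emod a, h,
    Int.gcd_emod]

theorem Int.ModEq.pow_totient {c : ℤ} {n : ℕ} (h : IsCoprime c n) :
    c ^ n.totient ≡ 1 [ZMOD n] := by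
  have := congrArg Units.val (ZMod.pow_totient (ZMod.unitOfIsCoprime c h))
  rw [Units.val_pow_eq_pow_val, ZMod.coe_unitOfIsCoprime, Units.val_one] at this
  exact (ZMod.intCast_eq_intCast_iff _ _ _).mp (by push_cast; exact this)

theorem Int.modEq_one_or_neg_one_of_sq_modEq_one {p : ℕ} (hp : p.Prime) (hpodd : Odd p)
    (α : ℕ) {t : ℤ} (h : t ^ 2 ≡ 1 [ZMOD (p ^ α : ℕ)]) :
    t ≡ 1 [ZMOD (p ^ α : ℕ)] ∨ t ≡ -1 [ZMOD (p ^ α : ℕ)] := by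
  have hprime : Prime (p : ℤ) := Nat.prime_iff_prime_int.mp hp
  have hdvd : (p : ℤ) ^ α ∣ (t - 1) * (t + 1) := by
    have := h.symm.dvd
    push_cast at this
    rwa [show t ^ 2 - 1 = (t - 1) * (t + 1) by ring] at this
  simp only [Int.modEq_comm (a := t), Int.modEq_iff_dvd, sub_neg_eq_add, Nat.cast_pow]
  by_cases hminus : (p : ℤ) ∣ t - 1
  · have hplus : ¬ (p : ℤ) ∣ t + 1 := by
      intro hplus
      have : p ∣ 2 := by exact_mod_cast (by simpa using dvd_sub hplus hminus : (p : ℤ) ∣ 2)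
      rw [(Nat.prime_dvd_prime_iff_eq hp Nat.prime_two).mp this] at hpodd
      exact absurd hpodd (by decide)
    exact .inl ((hprime.irreducible.coprime_iff_not_dvd.mpr hplus).pow_left.dvd_of_dvd_mul_right
      hdvd)
  · exact .inr ((hprime.irreducible.coprime_iff_not_dvd.mpr hminus).pow_left.dvd_of_dvd_mul_left
      hdvd)

theorem Int.pow_modEq_one_or_neg_one_of_totient_eq_two_mul {p : ℕ} (hp : p.Prime)
    (hpodd : Odd p) {α k : ℕ} (hk : (p ^ α).totient = 2 * k) {c : ℤ}
    (hc : IsCoprime c (p ^ α : ℕ)) :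
    c ^ k ≡ 1 [ZMOD (p ^ α : ℕ)] ∨ c ^ k ≡ -1 [ZMOD (p ^ α : ℕ)] := by
  refine modEq_one_or_neg_one_of_sq_modEq_one hp hpodd α ?_
  rw [← pow_mul, mul_comm, ← hk]
  exact Int.ModEq.pow_totient hc

theorem Int.pow_modEq_one_or_neg_one_of_modEq_pow_four {p : ℕ} (hp : p.Prime)
    (hpodd : Odd p) {α m : ℕ} (hm : (p ^ α).totient = 8 * m) (hmodd : Odd m) {b c : ℤ}
    (hb : IsCoprime b (p ^ α : ℕ))
    (hbc : b ≡ c ^ 4 [ZMOD (p ^ α : ℕ)] ∨ b ≡ -c ^ 4 [ZMOD (p ^ α : ℕ)]) :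
    b ^ m ≡ 1 [ZMOD (p ^ α : ℕ)] ∨ b ^ m ≡ -1 [ZMOD (p ^ α : ℕ)] := by
  have hc : IsCoprime c (p ^ α : ℕ) := by
    refine (IsCoprime.pow_left_iff (m := 4) (by norm_num)).mp ?_
    rcases hbc with hbc | hbc
    · exact hbc.isCoprime_iff.mp hb
    · exact (IsCoprime.neg_left_iff _ _).mp (hbc.isCoprime_iff.mp hb)
  have hcm := pow_modEq_one_or_neg_one_of_totient_eq_two_mul hp hpodd
    (k := 4 * m) (by rw [hm]; ring) hc
  rw [pow_mul] at hcm
  rcases hbc with hbc | hbc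
  · rcases hcm with h | h
    · exact .inl ((hbc.pow m).trans h)
    · exact .inr ((hbc.pow m).trans h)
  · have hneg := hbc.pow m
    rw [hmodd.neg_pow] at hneg
    rcases hcm with h | h
    · exact .inr (hneg.trans h.neg)
    · exact .inl (hneg.trans (by simpa using h.neg))

theorem stmt_13_general (p α : ℕ) (hp : p.Prime) (hpodd : Odd p)
    (n : ℕ) (hn : n = p ^ α) (hdvd : 8 ∣ n.totient) (hodd : Odd (n.totient / 8))
    (b : ℤ) (hb : IsCoprime b (n : ℤ))
    (hbqr : ∃ c : ℤ, b ≡ c ^ 4 [ZMOD (n : ℤ)] ∨ b ≡ -c ^ 4 [ZMOD (n : ℤ)]) :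
    (b ^ ((n.totient / 8 + 1) / 2)) ^ 2 ≡ b [ZMOD (n : ℤ)] ∨
      (b ^ ((n.totient / 8 + 1) / 2)) ^ 2 ≡ -b [ZMOD (n : ℤ)] := by
  subst hn
  set m := (p ^ α).totient / 8
  obtain ⟨c, hbc⟩ := hbqr
  have hbm := Int.pow_modEq_one_or_neg_one_of_modEq_pow_four hp hpodd
    (Nat.mul_div_cancel' hdvd).symm hodd hb hbc
  have hsq : (b ^ ((m + 1) / 2)) ^ 2 = b ^ m * b := by
    rw [← pow_mul, ← pow_succ, Nat.div_mul_cancel hodd.add_one.two_dvd]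
  rw [hsq]
  rcases hbm with h | h
  · exact .inl (by simpa using h.mul_right b)
  · exact .inr (by simpa using h.mul_right b)

/-- Let `n = p^α` (p an odd prime, α ≥ 1) with `8 ∣ φ(n)` and `φ(n)/8` odd. Let `b` be
coprime to `n` and a biquadratic residue modulo* `n`. Then `x = b^((φ(n)/8 + 1)/2)`
satisfies `x² ≡ b (mod n)` or `x² ≡ -b (mod n)`. -/
theorem stmt_13 (p α : ℕ) (hp : p.Prime) (hpodd : Odd p) (hα : 0 < α)
    (n : ℕ) (hn : n = p ^ α) (hdvd : 8 ∣ n.totient) (hodd : Odd (n.totient / 8))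
    (b : ℤ) (hb : IsCoprime b (n : ℤ))
    (hbqr : ∃ c : ℤ, b ≡ c ^ 4 [ZMOD (n : ℤ)] ∨ b ≡ -c ^ 4 [ZMOD (n : ℤ)]) :
    (b ^ ((n.totient / 8 + 1) / 2)) ^ 2 ≡ b [ZMOD (n : ℤ)] ∨
      (b ^ ((n.totient / 8 + 1) / 2)) ^ 2 ≡ -b [ZMOD (n : ℤ)] :=
  stmt_13_general p α hp hpodd n hn hdvd hodd b hb hbqr
end

section
/- Let n ≥ 3 be an odd integer and let Ψ_n be the minimal polynomial over ℚ of 2·cos(2π/n). Then, as polynomials over ℝ, Ψ_n(s) = ∏_{1 ≤ j ≤ (n-1)/2, gcd(j,n)=1} (s - 2·cos(2πj/n)); that is, the roots of Ψ_n are exactly the numbers 2·cos(2πj/n) with 1 ≤ j ≤ (n-1)/2 and j coprime to n, each occurring with multiplicity one. -/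
/-!
Let `ζ` be a primitive `n`-th root of unity in the cyclotomic field `K = ℚ(ζ)`. Each `j` coprime
to `n` gives an embedding `K → ℂ` with `ζ ↦ exp(2πij/n)`, which sends `ζ + ζ⁻¹` to
`2·cos(2πj/n)`; hence all these numbers are roots of the minimal polynomial of `ζ + ζ⁻¹`, and
for `1 ≤ j ≤ (n-1)/2` they are pairwise distinct. Since every embedding maps `ℚ(ζ + ζ⁻¹)` into
`ℝ` while `ζ` is not real, `ℚ(ζ + ζ⁻¹)` is a proper subfield of `K`, so by the tower law its
degree is at most `φ(n)/2`, which is exactly the number of such `j`. A monic polynomial with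
at least as many distinct roots as its degree is the product of the corresponding linear factors.
-/

open Polynomial IntermediateField Module Real

theorem Polynomial.Monic.eq_prod_X_sub_C_of_natDegree_le {R ι : Type*} [CommRing R] [IsDomain R]
    {p : R[X]} (hp : p.Monic) {s : Finset ι} {f : ι → R} (hf : Set.InjOn f s)
    (hroots : ∀ i ∈ s, p.IsRoot (f i)) (hdeg : p.natDegree ≤ s.card) :
    p = ∏ i ∈ s, (X - C (f i)) := by
  set M := s.val.map f
  have hM : M ≤ p.roots := by
    rw [Multiset.le_iff_subset (s.nodup.map_on hf)]
    intro a ha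
    obtain ⟨i, hi, rfl⟩ := Multiset.mem_map.1 ha
    exact (mem_roots hp.ne_zero).2 (hroots i hi)
  have hMroots : M = p.roots :=
    Multiset.eq_of_le_of_card_le hM (by rw [Multiset.card_map]; exact (card_roots' p).trans hdeg)
  have hcard_roots : p.roots.card = p.natDegree :=
    le_antisymm (card_roots' p) (by rw [← hMroots, Multiset.card_map]; exact hdeg)
  conv_lhs => rw [← prod_multiset_X_sub_C_of_monic_of_roots_card_eq hp hcard_roots, ← hMroots]
  rw [Finset.prod_eq_multiset_prod, Multiset.map_map]
  rfl

theorem Real.injOn_two_mul_cos_two_pi_mul_div (n : ℕ) :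
    Set.InjOn (fun j : ℕ => 2 * cos (2 * π * j / n)) {j | 2 * j ≤ n} := by
  rcases n.eq_zero_or_pos with rfl | hn
  · intro i hi j hj _
    simp_all
  have hIcc : ∀ j : ℕ, 2 * j ≤ n → 2 * π * j / n ∈ Set.Icc 0 π := fun j hj => by
    refine ⟨by positivity, ?_⟩
    rw [div_le_iff₀ (by positivity)]
    have : (2 * j : ℝ) ≤ n := by exact_mod_cast hj
    nlinarith [pi_pos]
  intro i hi j hj hij
  have := injOn_cos (hIcc i hi) (hIcc j hj) (by simpa using hij)
  field_simp at this
  exact_mod_cast this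

theorem Complex.exp_mul_I_add_inv (θ : ℝ) :
    exp (θ * I) + (exp (θ * I))⁻¹ = ((2 * Real.cos θ : ℝ) : ℂ) := by
  rw [← exp_neg, ← neg_mul, ← two_cos]
  push_cast
  ring

open Finset in
theorem Nat.two_mul_card_filter_coprime_Icc_eq_totient {n : ℕ} (hn : 2 < n) :
    2 * #{j ∈ Icc 1 ((n - 1) / 2) | j.Coprime n} = n.totient := by
  set A := {j ∈ Icc 1 ((n - 1) / 2) | j.Coprime n}
  have hsplit : {a ∈ range n | n.Coprime a} = A ∪ A.image (n - ·) := by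
    ext a
    simp only [A, mem_filter, mem_range, mem_union, mem_image, mem_Icc]
    constructor
    · rintro ⟨ha, hc⟩
      have ha0 : a ≠ 0 := by rintro rfl; simp at hc; omega
      -- for `n > 2`, the midpoint `n / 2` is never coprime to `n`
      have hhalf : 2 * a ≠ n := by
        rintro rfl
        have := hc.symm.eq_one_of_dvd (dvd_mul_left a 2)
        omega
      by_cases hle : a ≤ (n - 1) / 2
      · exact Or.inl ⟨⟨by omega, hle⟩, hc.symm⟩
      · exact Or.inr ⟨n - a, ⟨⟨by omega, by omega⟩, (coprime_self_sub_left ha.le).2 hc.symm⟩,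
          by omega⟩
    · rintro (⟨⟨h1, h2⟩, hc⟩ | ⟨j, ⟨⟨h1, h2⟩, hc⟩, rfl⟩)
      · exact ⟨by omega, hc.symm⟩
      · exact ⟨by omega, ((coprime_self_sub_left (by omega)).2 hc).symm⟩
  rw [totient_eq_card_coprime, hsplit, card_union_of_disjoint, Finset.card_image_of_injOn]
  · ring
  · intro x hx y hy hxy
    simp only [A, coe_filter, Set.mem_ofPred_eq, mem_Icc] at hx hy
    simp only at hxy
    omega
  · simp only [disjoint_left, A, mem_image, mem_filter, mem_Icc]
    omega

theorem IntermediateField.two_mul_finrank_le_of_ne_top {K L : Type*} [Field K] [Field L]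
    [Algebra K L] [FiniteDimensional K L] {F : IntermediateField K L} (hF : F ≠ ⊤) :
    2 * finrank K F ≤ finrank K L := by
  rw [← finrank_mul_finrank K F L, mul_comm 2]
  have hpos : 0 < finrank F L := finrank_pos
  have hne : finrank F L ≠ 1 := fun h =>
    hF (eq_of_le_of_finrank_le' le_top (by rw [h, IntermediateField.finrank_top]))
  exact Nat.mul_le_mul_left _ (by omega)

theorem IntermediateField.im_algHom_eq_zero_of_mem_adjoin {K : Type*} [Field K] [Algebra ℚ K]
    (φ : K →ₐ[ℚ] ℂ) {a x : K} (ha : (φ a).im = 0) (hx : x ∈ ℚ⟮a⟯) : (φ x).im = 0 := by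
  have hreal : ℚ⟮a⟯ ≤ ((Complex.ofRealAm.restrictScalars ℚ).fieldRange).comap φ :=
    adjoin_simple_le_iff.2 ⟨(φ a).re, Complex.ext rfl ha.symm⟩
  obtain ⟨r, hr⟩ := hreal hx
  change Complex.ofReal r = φ x at hr
  rw [← hr, Complex.ofReal_im]

namespace IsPrimitiveRoot

variable {n : ℕ} [NeZero n] {K : Type*} [Field K] [Algebra ℚ K] [IsCyclotomicExtension {n} ℚ K]
  {ζ : K}

theorem exists_algHom_apply_eq_exp (hζ : IsPrimitiveRoot ζ n) {j : ℕ} (hj : j.Coprime n) :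
    ∃ φ : K →ₐ[ℚ] ℂ, φ ζ = Complex.exp ((2 * π * j / n : ℝ) * Complex.I) := by
  have hprim : Complex.exp ((2 * π * j / n : ℝ) * Complex.I) ∈ primitiveRoots n ℂ := by
    rw [mem_primitiveRoots (NeZero.pos n)]
    convert Complex.isPrimitiveRoot_exp_of_coprime j n (NeZero.ne n) hj using 2
    push_cast
    ring
  have hirr := cyclotomic.irreducible_rat (NeZero.pos n)
  set e := hζ.embeddingsEquivPrimitiveRoots ℂ hirr
  exact ⟨e.symm ⟨_, hprim⟩, by
    rw [← hζ.embeddingsEquivPrimitiveRoots_apply_coe ℂ hirr, e.apply_symm_apply]⟩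

theorem minpoly_two_mul_cos_eq (hζ : IsPrimitiveRoot ζ n) {j : ℕ} (hj : j.Coprime n) :
    minpoly ℚ (2 * cos (2 * π * j / n)) = minpoly ℚ (ζ + ζ⁻¹) := by
  obtain ⟨φ, hφ⟩ := hζ.exists_algHom_apply_eq_exp hj
  have hφη : φ (ζ + ζ⁻¹) = algebraMap ℝ ℂ (2 * cos (2 * π * j / n)) := by
    rw [map_add, map_inv₀, hφ, Complex.exp_mul_I_add_inv]
    rfl
  rw [← minpoly.algebraMap_eq (algebraMap ℝ ℂ).injective, ← hφη,
    minpoly.algHom_eq φ φ.injective]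

theorem two_mul_natDegree_minpoly_add_inv_le (hn : 2 < n) (hζ : IsPrimitiveRoot ζ n) :
    2 * (minpoly ℚ (ζ + ζ⁻¹)).natDegree ≤ n.totient := by
  have := IsCyclotomicExtension.finiteDimensional {n} ℚ K
  rw [← adjoin.finrank (IsIntegral.of_finite ℚ _),
    ← IsCyclotomicExtension.finrank K (cyclotomic.irreducible_rat (NeZero.pos n))]
  refine two_mul_finrank_le_of_ne_top fun htop => ?_
  obtain ⟨φ, hφ⟩ := hζ.exists_algHom_apply_eq_exp (Nat.coprime_one_left n)
  have hreal : (φ ζ).im = 0 := im_algHom_eq_zero_of_mem_adjoin φ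
    (by rw [map_add, map_inv₀, hφ, Complex.exp_mul_I_add_inv, Complex.ofReal_im])
    (htop ▸ mem_top)
  rw [hφ, Complex.exp_ofReal_mul_I_im, Nat.cast_one, mul_one] at hreal
  refine (sin_pos_of_pos_of_lt_pi (by positivity) ?_).ne' hreal
  rw [div_lt_iff₀ (by positivity)]
  have : (2 : ℝ) < n := by exact_mod_cast hn
  nlinarith [pi_pos]

end IsPrimitiveRoot

open Real Polynomial in
theorem stmt_16_general (n : ℕ) (hn : 3 ≤ n) :
    (minpoly ℚ (2 * Real.cos (2 * π / n))).map (algebraMap ℚ ℝ) =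
      ∏ j ∈ (Finset.Icc 1 ((n - 1) / 2)).filter (fun j => Nat.Coprime j n),
        (X - C (2 * Real.cos (2 * π * j / n))) := by
  have : NeZero n := ⟨by omega⟩
  -- instance search does not find this one unaided
  have : IsCyclotomicExtension {n} ℚ (CyclotomicField n ℚ) :=
    CyclotomicField.isCyclotomicExtension n ℚ
  have hζ := IsCyclotomicExtension.zeta_spec n ℚ (CyclotomicField n ℚ)
  have hmin := hζ.minpoly_two_mul_cos_eq (Nat.coprime_one_left n)
  rw [Nat.cast_one, mul_one] at hmin
  rw [hmin]
  refine ((minpoly.monic (IsIntegral.of_finite ℚ _)).map _).eq_prod_X_sub_C_of_natDegree_le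
    ((injOn_two_mul_cos_two_pi_mul_div n).mono fun j hj => ?_) (fun j hj => ?_) ?_
  · simp only [Finset.coe_filter, Finset.mem_Icc, Set.mem_ofPred_eq] at hj
    show 2 * j ≤ n
    omega
  · rw [IsRoot, eval_map, ← aeval_def, ← hζ.minpoly_two_mul_cos_eq (Finset.mem_filter.1 hj).2,
      minpoly.aeval]
  · rw [natDegree_map]
    have hdeg := hζ.two_mul_natDegree_minpoly_add_inv_le (by omega)
    have hcard := Nat.two_mul_card_filter_coprime_Icc_eq_totient (show 2 < n by omega)
    omega

open Real Polynomial in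
/-- Let `n ≥ 3` be odd and `Ψ_n` the minimal polynomial over `ℚ` of `2·cos(2π/n)`. Then,
over `ℝ`, `Ψ_n(s) = ∏_{1 ≤ j ≤ (n-1)/2, gcd(j,n)=1} (s - 2·cos(2πj/n))`. -/
theorem stmt_16 (n : ℕ) (hn : 3 ≤ n) (hodd : Odd n) :
    (minpoly ℚ (2 * Real.cos (2 * π / n))).map (algebraMap ℚ ℝ) =
      ∏ j ∈ (Finset.Icc 1 ((n - 1) / 2)).filter (fun j => Nat.Coprime j n),
        (X - C (2 * Real.cos (2 * π * j / n))) :=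
  stmt_16_general n hn
end

section
/- Let n ≥ 3 be an odd integer, let Φ_n denote the n-th cyclotomic polynomial, and let Ψ_n be the minimal polynomial over ℚ of 2·cos(2π/n). Then for every nonzero complex number z: Φ_n(z) = z^{φ(n)/2} · Ψ_n(z + z⁻¹), where φ is Euler's totient function. -/
/-! Let `ζ = exp(2πi/n)` and `α = ζ + ζ⁻¹ = 2 cos(2π/n)`, with minimal polynomial `Ψ` of
degree `d`. The polynomial `X^d Ψ(X + X⁻¹)` has rational coefficients, is monic of degree
`2d` and vanishes at `ζ`, so `Φ_n` divides it. Conversely `ℚ(α)` is real while `ζ` is not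
(as `n ≥ 3`), so `ℚ(α)` is a proper subfield of `ℚ(ζ)` and `2d ≤ [ℚ(ζ) : ℚ] = φ(n)`.
Hence the two monic polynomials agree. -/

open Real Polynomial Module IntermediateField

namespace Polynomial

variable {R : Type*} [CommRing R]

/-- `X ^ d * p (X + X⁻¹)` for `d = p.natDegree`, written without `X⁻¹`. -/
noncomputable def reciprocalLift (p : R[X]) : R[X] :=
  ∑ i ∈ Finset.range (p.natDegree + 1),
    C (p.coeff i) * ((X ^ 2 + 1) ^ i * X ^ (p.natDegree - i))

theorem aeval_reciprocalLift {K : Type*} [Field K] [Algebra R K] (p : R[X]) {w : K}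
    (hw : w ≠ 0) : aeval w p.reciprocalLift = w ^ p.natDegree * aeval (w + w⁻¹) p := by
  rw [reciprocalLift, map_sum, aeval_eq_sum_range (p := p), Finset.mul_sum]
  refine Finset.sum_congr rfl fun i hi => ?_
  have hid : i ≤ p.natDegree := Nat.lt_succ_iff.mp (Finset.mem_range.mp hi)
  have hw2 : w * (w + w⁻¹) = w ^ 2 + 1 := by field_simp
  calc aeval w (C (p.coeff i) * ((X ^ 2 + 1) ^ i * X ^ (p.natDegree - i)))
      = algebraMap R K (p.coeff i) * ((w ^ 2 + 1) ^ i * w ^ (p.natDegree - i)) := by simp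
    _ = w ^ p.natDegree * p.coeff i • (w + w⁻¹) ^ i := by
        rw [Algebra.smul_def, ← hw2, mul_pow, ← pow_sub_mul_pow w hid]; ring

theorem monic_X_sq_add_one : (X ^ 2 + 1 : R[X]).Monic := by
  simpa using monic_X_pow_add_C (1 : R) two_ne_zero

section Nontrivial

variable [Nontrivial R]

theorem natDegree_X_sq_add_one : (X ^ 2 + 1 : R[X]).natDegree = 2 := by
  simpa using natDegree_X_pow_add_C (n := 2) (r := (1 : R))

theorem natDegree_X_sq_add_one_pow_mul_X_pow (i j : ℕ) :
    ((X ^ 2 + 1 : R[X]) ^ i * X ^ j).natDegree = 2 * i + j := by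
  rw [(monic_X_sq_add_one.pow i).natDegree_mul (monic_X_pow j),
    monic_X_sq_add_one.natDegree_pow, natDegree_X_sq_add_one, natDegree_X_pow, mul_comm]

theorem coeff_reciprocalLift_two_mul_natDegree (p : R[X]) :
    p.reciprocalLift.coeff (2 * p.natDegree) = p.leadingCoeff := by
  rw [reciprocalLift, finsetSum_coeff,
    Finset.sum_eq_single_of_mem _ (Finset.self_mem_range_succ _)]
  · rw [coeff_C_mul, Nat.sub_self, ← add_zero (2 * p.natDegree),
      ← natDegree_X_sq_add_one_pow_mul_X_pow (R := R) p.natDegree 0,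
      ((monic_X_sq_add_one.pow _).mul (monic_X_pow _)).coeff_natDegree, mul_one, leadingCoeff]
  · intro i hi hne
    have hid : i < p.natDegree :=
      lt_of_le_of_ne (Nat.lt_succ_iff.mp (Finset.mem_range.mp hi)) hne
    refine coeff_eq_zero_of_natDegree_lt ((natDegree_C_mul_le _ _).trans_lt ?_)
    rw [natDegree_X_sq_add_one_pow_mul_X_pow]
    omega

theorem natDegree_reciprocalLift_le (p : R[X]) :
    p.reciprocalLift.natDegree ≤ 2 * p.natDegree := by
  refine natDegree_sum_le_of_forall_le _ _ fun i hi => (natDegree_C_mul_le _ _).trans ?_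
  have hid : i ≤ p.natDegree := Nat.lt_succ_iff.mp (Finset.mem_range.mp hi)
  rw [natDegree_X_sq_add_one_pow_mul_X_pow]
  omega

theorem Monic.reciprocalLift {p : R[X]} (hp : p.Monic) : p.reciprocalLift.Monic :=
  monic_of_natDegree_le_of_coeff_eq_one _ p.natDegree_reciprocalLift_le
    (p.coeff_reciprocalLift_two_mul_natDegree.trans hp)

theorem Monic.natDegree_reciprocalLift {p : R[X]} (hp : p.Monic) :
    p.reciprocalLift.natDegree = 2 * p.natDegree :=
  natDegree_eq_of_le_of_coeff_ne_zero p.natDegree_reciprocalLift_le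
    (by rw [coeff_reciprocalLift_two_mul_natDegree, hp.leadingCoeff]; exact one_ne_zero)

end Nontrivial

end Polynomial

namespace IntermediateField

variable {K L : Type*} [Field K] [Field L] [Algebra K L]

theorem two_mul_finrank_le_of_lt {F E : IntermediateField K L} [FiniteDimensional K E]
    (h : F < E) : 2 * finrank K F ≤ finrank K E := by
  obtain ⟨m, hm⟩ := finrank_dvd_of_le_right h.le
  have hm0 : m ≠ 0 := by rintro rfl; exact finrank_pos.ne' (by simpa using hm)
  have hm1 : m ≠ 1 := by
    rintro rfl
    exact h.ne (eq_of_le_of_finrank_eq h.le (by simpa using hm.symm))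
  calc 2 * finrank K F ≤ m * finrank K F := Nat.mul_le_mul_right _ (by omega)
    _ = finrank K E := by rw [hm, mul_comm]

end IntermediateField

theorem IsPrimitiveRoot.ofReal_ne {ζ : ℂ} {n : ℕ} (hζ : IsPrimitiveRoot ζ n) (hn : 3 ≤ n)
    (r : ℝ) : (r : ℂ) ≠ ζ := by
  rintro rfl
  have hrn : r ^ n = 1 := by exact_mod_cast hζ.pow_eq_one
  have habs : |r| = 1 := by
    refine (pow_eq_one_iff_of_nonneg (abs_nonneg r) (by omega : n ≠ 0)).mp ?_
    rw [pow_abs, hrn, abs_one]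
  have hsq : r ^ 2 = 1 := by rw [← sq_abs, habs, one_pow]
  have hn2 : n ∣ 2 := hζ.dvd_of_pow_eq_one 2 (by exact_mod_cast hsq)
  exact absurd (Nat.le_of_dvd two_pos hn2) (by omega)

section TwoCos

variable {n : ℕ}

theorem ofReal_two_cos_eq_exp_add_inv (n : ℕ) :
    ((2 * Real.cos (2 * π / n) : ℝ) : ℂ) =
      Complex.exp (2 * π * Complex.I / n) + (Complex.exp (2 * π * Complex.I / n))⁻¹ := by
  push_cast
  rw [← Complex.exp_neg, Complex.two_cos]
  ring_nf

theorem isIntegral_two_cos (hn : n ≠ 0) : IsIntegral ℚ (2 * Real.cos (2 * π / n)) := by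
  have hζ := Complex.isPrimitiveRoot_exp n hn
  have h := ((hζ.isIntegral hn.bot_lt).tower_top (A := ℚ)).add
    ((hζ.inv.isIntegral hn.bot_lt).tower_top (A := ℚ))
  rw [← ofReal_two_cos_eq_exp_add_inv] at h
  exact (isIntegral_algebraMap_iff (algebraMap ℝ ℂ).injective).mp h

theorem two_mul_natDegree_minpoly_two_cos_le (hn : 3 ≤ n) :
    2 * (minpoly ℚ (2 * Real.cos (2 * π / n))).natDegree ≤ n.totient := by
  set α := 2 * Real.cos (2 * π / n)
  set ζ := Complex.exp (2 * π * Complex.I / n)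
  have hζ : IsPrimitiveRoot ζ n := Complex.isPrimitiveRoot_exp n (by omega)
  have hζint : IsIntegral ℚ ζ := (hζ.isIntegral (by omega)).tower_top
  have hαint : IsIntegral ℚ (α : ℂ) := (isIntegral_two_cos (by omega)).algebraMap
  have : FiniteDimensional ℚ ℚ⟮ζ⟯ := adjoin.finiteDimensional hζint
  have hle : ℚ⟮(α : ℂ)⟯ ≤ ℚ⟮ζ⟯ := by
    rw [adjoin_simple_le_iff, ofReal_two_cos_eq_exp_add_inv]
    exact add_mem (mem_adjoin_simple_self ℚ ζ) (inv_mem (mem_adjoin_simple_self ℚ ζ))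
  have hne : ℚ⟮(α : ℂ)⟯ ≠ ℚ⟮ζ⟯ := by
    intro h
    have hreal : ℚ⟮(α : ℂ)⟯ ≤ (IsScalarTower.toAlgHom ℚ ℝ ℂ).fieldRange :=
      adjoin_simple_le_iff.mpr ⟨α, rfl⟩
    obtain ⟨r, hr⟩ := hreal (h ▸ mem_adjoin_simple_self ℚ ζ)
    exact hζ.ofReal_ne hn r hr
  have h := two_mul_finrank_le_of_lt (lt_of_le_of_ne hle hne)
  have hmin : minpoly ℚ (α : ℂ) = minpoly ℚ α :=
    minpoly.algebraMap_eq (algebraMap ℝ ℂ).injective α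
  rwa [adjoin.finrank hαint, adjoin.finrank hζint, ← cyclotomic_eq_minpoly_rat hζ (by omega),
    natDegree_cyclotomic, hmin] at h

theorem cyclotomic_eq_reciprocalLift_minpoly_two_cos (hn : 3 ≤ n) :
    cyclotomic n ℚ = (minpoly ℚ (2 * Real.cos (2 * π / n))).reciprocalLift := by
  set ζ := Complex.exp (2 * π * Complex.I / n)
  have hζ : IsPrimitiveRoot ζ n := Complex.isPrimitiveRoot_exp n (by omega)
  have hmonic := minpoly.monic (isIntegral_two_cos (n := n) (by omega))
  refine (eq_of_monic_of_dvd_of_natDegree_le (cyclotomic.monic n ℚ) hmonic.reciprocalLift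
    ?_ ?_).symm
  · rw [cyclotomic_eq_minpoly_rat hζ (by omega)]
    refine minpoly.dvd ℚ ζ ?_
    rw [aeval_reciprocalLift _ (hζ.ne_zero (by omega)), ← ofReal_two_cos_eq_exp_add_inv,
      ← Complex.coe_algebraMap, aeval_algebraMap_apply, minpoly.aeval, map_zero, mul_zero]
  · rw [hmonic.natDegree_reciprocalLift, natDegree_cyclotomic]
    exact two_mul_natDegree_minpoly_two_cos_le hn

end TwoCos

open Real Polynomial in
theorem stmt_17_general (n : ℕ) (hn : 3 ≤ n) (z : ℂ) (hz : z ≠ 0) :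
    (Polynomial.cyclotomic n ℂ).eval z =
      z ^ (n.totient / 2) *
        Polynomial.aeval (z + z⁻¹) (minpoly ℚ (2 * Real.cos (2 * π / n))) := by
  have hΦ := cyclotomic_eq_reciprocalLift_minpoly_two_cos hn
  have hdeg : n.totient / 2 = (minpoly ℚ (2 * Real.cos (2 * π / n))).natDegree := by
    rw [← natDegree_cyclotomic n ℚ, hΦ,
      (minpoly.monic (isIntegral_two_cos (by omega))).natDegree_reciprocalLift]
    omega
  rw [← map_cyclotomic n (algebraMap ℚ ℂ), eval_map_algebraMap, hΦ, aeval_reciprocalLift _ hz,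
    hdeg]

open Real Polynomial in
/-- Let `n ≥ 3` be odd, `Φ_n` the `n`-th cyclotomic polynomial and `Ψ_n` the minimal
polynomial over `ℚ` of `2·cos(2π/n)`. Then for every nonzero `z : ℂ`,
`Φ_n(z) = z^(φ(n)/2) · Ψ_n(z + z⁻¹)`. -/
theorem stmt_17 (n : ℕ) (hn : 3 ≤ n) (hodd : Odd n) (z : ℂ) (hz : z ≠ 0) :
    (Polynomial.cyclotomic n ℂ).eval z =
      z ^ (n.totient / 2) *
        Polynomial.aeval (z + z⁻¹) (minpoly ℚ (2 * Real.cos (2 * π / n))) :=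
  stmt_17_general n hn z hz
end

section
/- Let n ≥ 3 be an odd integer and m = (n-1)/2. Then, as polynomials over ℚ, P_m(s) = ∏_{d | n, d > 1} Ψ_d(s), where P_m(s) = 1 + Σ_{j=1}^{m} 2·T_j(s/2) with T_j the j-th Chebyshev polynomial of the first kind, and Ψ_d is the minimal polynomial over ℚ of 2·cos(2π/d). -/
/-!
With `s = 2 cos θ`, `P_m(s)` is the Dirichlet kernel `sin ((2m+1) θ/2) / sin (θ/2)`, so for
`d ≥ 2` the number `2 cos (2π/d)` is a root of `P_m` exactly when `d ∣ n = 2m+1`. Hence every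
`Ψ_d` with `1 < d ∣ n` divides `P_m`; the `Ψ_d` are irreducible and pairwise distinct (a root of
`Ψ_e` is a root of `Ψ_d` only if `e ∣ d`), so their product divides `P_m`. Both sides are monic
of degree `m`: `deg Ψ_d = φ(d)/2` because `ζ = e^{2πi/d}` is a root of `X² - (ζ + ζ⁻¹) X + 1` and
is not in the real field `ℚ(ζ + ζ⁻¹)`, and `∑_{1 < d ∣ n} φ(d) = n - 1`.
-/

open Polynomial IntermediateField Module

namespace Polynomial

variable {R : Type*} [CommRing R]

theorem Monic.X_mul_sub [Nontrivial R] {p q : R[X]} (hp : p.Monic)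
    (hq : q.natDegree ≤ p.natDegree) :
    (X * p - q).Monic ∧ (X * p - q).natDegree = p.natDegree + 1 := by
  have hXp : (X * p).natDegree = p.natDegree + 1 := by
    rw [monic_X.natDegree_mul hp, natDegree_X, add_comm]
  have hlt : q.natDegree < (X * p).natDegree := by omega
  exact ⟨(monic_X.mul hp).sub_of_left (degree_lt_degree hlt),
    (natDegree_sub_eq_left_of_natDegree_lt hlt).trans hXp⟩

variable (R)

theorem Chebyshev.monic_C_natCast_succ_and_natDegree [Nontrivial R] (n : ℕ) :
    (Chebyshev.C R (n + 1)).Monic ∧ (Chebyshev.C R (n + 1)).natDegree = n + 1 := by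
  induction n using Nat.twoStepInduction with
  | zero => simp [monic_X]
  | one => simpa [Chebyshev.C_two, sq] using monic_X.X_mul_sub (q := (2 : R[X])) (by simp)
  | more n ih₁ ih₂ =>
    have hrec : Chebyshev.C R (↑(n + 2) + 1) =
        X * Chebyshev.C R (↑(n + 1) + 1) - Chebyshev.C R (↑n + 1) := by
      push_cast
      rw [show (n : ℤ) + 2 + 1 = ↑n + 1 + 2 by ring, Chebyshev.C_add_two]
    obtain ⟨hmonic, hdeg⟩ := ih₂.1.X_mul_sub (q := Chebyshev.C R (↑n + 1))
      (by rw [ih₁.2, ih₂.2]; omega)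
    rw [hrec]
    exact ⟨hmonic, by rw [hdeg, ih₂.2]⟩

/-- The polynomial `P_m` of the statement (`Chebyshev.C R j` is `2 T_j (X / 2)`); its value
`P_m (2 cos θ) = 1 + 2 ∑_{j=1}^m cos (j θ)` is the Dirichlet kernel. -/
noncomputable def dirichletKernel (m : ℕ) : R[X] :=
  1 + ∑ j ∈ Finset.Icc 1 m, Chebyshev.C R j

theorem dirichletKernel_succ (m : ℕ) :
    dirichletKernel R (m + 1) = dirichletKernel R m + Chebyshev.C R (m + 1) := by
  rw [dirichletKernel, dirichletKernel, Finset.sum_Icc_succ_top (by omega), add_assoc]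
  push_cast
  rfl

theorem monic_dirichletKernel_and_natDegree [Nontrivial R] (m : ℕ) :
    (dirichletKernel R m).Monic ∧ (dirichletKernel R m).natDegree = m := by
  induction m with
  | zero => simp [dirichletKernel]
  | succ m ih =>
    obtain ⟨hC, hdeg⟩ := Chebyshev.monic_C_natCast_succ_and_natDegree R m
    have hlt : (dirichletKernel R m).degree < (Chebyshev.C R (m + 1)).degree := by
      apply degree_lt_degree; omega
    rw [dirichletKernel_succ]
    exact ⟨hC.add_of_right hlt, by rw [natDegree_add_eq_right_of_degree_lt hlt, hdeg]⟩

end Polynomial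

open Real

theorem Real.sin_natCast_mul_pi_div_eq_zero_iff {a d : ℕ} (hd : d ≠ 0) :
    sin (a * π / d) = 0 ↔ d ∣ a := by
  have hd' : (d : ℝ) ≠ 0 := Nat.cast_ne_zero.2 hd
  rw [sin_eq_zero_iff]
  constructor
  · rintro ⟨k, hk⟩
    have hka : (k * d : ℝ) = a := by field_simp at hk; exact hk
    exact Int.natCast_dvd_natCast.1 ⟨k, by rw [mul_comm]; exact_mod_cast hka.symm⟩
  · rintro ⟨k, rfl⟩
    exact ⟨k, by push_cast; field_simp⟩

theorem Polynomial.sin_mul_aeval_dirichletKernel {R : Type*} [CommRing R] [Algebra R ℝ]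
    (θ : ℝ) (m : ℕ) :
    sin (θ / 2) * aeval (2 * cos θ) (dirichletKernel R m) = sin ((2 * m + 1) * (θ / 2)) := by
  induction m with
  | zero => simp [dirichletKernel]
  | succ m ih =>
    rw [dirichletKernel_succ, map_add, mul_add, ih, Chebyshev.aeval_C,
      Chebyshev.C_two_mul_real_cos]
    have := Real.sin_sub_sin ((2 * (m + 1) + 1) * (θ / 2)) ((2 * m + 1) * (θ / 2))
    push_cast
    ring_nf at this ⊢
    linarith

theorem Polynomial.aeval_dirichletKernel_eq_zero_iff {R : Type*} [CommRing R] [Algebra R ℝ]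
    {d : ℕ} (hd : 2 ≤ d) (m : ℕ) :
    aeval (2 * cos (2 * π / d)) (dirichletKernel R m) = 0 ↔ d ∣ 2 * m + 1 := by
  have hsin : sin (2 * π / d / 2) ≠ 0 := by
    refine (sin_pos_of_pos_of_lt_pi (by positivity) ?_).ne'
    rw [div_div, div_lt_iff₀ (by positivity)]
    have : (2 : ℝ) ≤ d := by exact_mod_cast hd
    nlinarith [pi_pos]
  rw [← mul_right_inj' hsin, sin_mul_aeval_dirichletKernel, mul_zero,
    ← Real.sin_natCast_mul_pi_div_eq_zero_iff (by omega : d ≠ 0)]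
  push_cast
  ring_nf

theorem IntermediateField.finrank_adjoin_simple_eq_finrank_adjoin_add_inv_mul_two
    {F E : Type*} [Field F] [Field E] [Algebra F E] {ζ : E} (hζ : IsIntegral F ζ)
    (hζ_notMem : ζ ∉ F⟮ζ + ζ⁻¹⟯) : finrank F F⟮ζ⟯ = finrank F F⟮ζ + ζ⁻¹⟯ * 2 := by
  have hζ0 : ζ ≠ 0 := fun h => hζ_notMem (h ▸ zero_mem _)
  have hle : F⟮ζ + ζ⁻¹⟯ ≤ F⟮ζ⟯ := adjoin_simple_le_iff.2 <|
    add_mem (mem_adjoin_simple_self F ζ) (inv_mem (mem_adjoin_simple_self F ζ))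
  have hζK : IsIntegral F⟮ζ + ζ⁻¹⟯ ζ := hζ.tower_top
  have hq : (X ^ 2 - C (AdjoinSimple.gen F (ζ + ζ⁻¹)) * X + 1).natDegree = 2 := by
    compute_degree!
  have hqζ : aeval ζ (X ^ 2 - C (AdjoinSimple.gen F (ζ + ζ⁻¹)) * X + 1) = 0 := by
    simp only [map_add, map_sub, map_mul, map_pow, aeval_X, aeval_C, map_one,
      AdjoinSimple.algebraMap_gen]
    field_simp
    ring
  have hdeg : (minpoly F⟮ζ + ζ⁻¹⟯ ζ).natDegree = 2 := by
    refine le_antisymm ?_ ((minpoly.two_le_natDegree_iff hζK).2 ?_)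
    · exact hq ▸ natDegree_le_of_dvd (minpoly.dvd _ ζ hqζ) (by rintro h; simp [h] at hq)
    · rintro ⟨y, hy⟩
      have hyK : algebraMap F⟮ζ + ζ⁻¹⟯ E y ∈ F⟮ζ + ζ⁻¹⟯ := y.2
      rw [hy] at hyK
      exact hζ_notMem hyK
  rw [← finrank_bot_mul_relfinrank hle, relfinrank_eq_finrank_of_le hle, extendScalars_adjoin hle,
    adjoin.finrank hζK, hdeg]

theorem Complex.ofReal_two_mul_cos_eq_exp_add_inv (θ : ℝ) :
    ((2 * Real.cos θ : ℝ) : ℂ) = exp (θ * I) + (exp (θ * I))⁻¹ := by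
  rw [← Complex.exp_neg, ofReal_mul, ofReal_cos, Complex.cos, neg_mul]
  push_cast
  ring

theorem Complex.isPrimitiveRoot_exp_ofReal_two_pi_div_mul_I {d : ℕ} (hd : d ≠ 0) :
    IsPrimitiveRoot (exp ((2 * π / d : ℝ) * I)) d := by
  convert isPrimitiveRoot_exp d hd using 2
  push_cast
  ring

theorem isIntegral_two_mul_cos_two_pi_div {d : ℕ} (hd : d ≠ 0) :
    IsIntegral ℚ (2 * cos (2 * π / d)) := by
  have hζ := Complex.isPrimitiveRoot_exp_ofReal_two_pi_div_mul_I hd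
  rw [← isIntegral_algebraMap_iff (algebraMap ℝ ℂ).injective, Complex.coe_algebraMap,
    Complex.ofReal_two_mul_cos_eq_exp_add_inv]
  exact (hζ.isIntegral (Nat.pos_of_ne_zero hd)).tower_top.add
    (hζ.inv.isIntegral (Nat.pos_of_ne_zero hd)).tower_top

theorem natDegree_minpoly_two_mul_cos_two_pi_div_mul_two {d : ℕ} (hd : 3 ≤ d) :
    (minpoly ℚ (2 * cos (2 * π / d))).natDegree * 2 = d.totient := by
  have hangle : 0 < 2 * π / d ∧ 2 * π / d < π := by
    refine ⟨by positivity, ?_⟩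
    rw [div_lt_iff₀ (by positivity)]
    have : (3 : ℝ) ≤ d := by exact_mod_cast hd
    nlinarith [pi_pos]
  set ζ := Complex.exp ((2 * π / d : ℝ) * Complex.I)
  have hζ : IsPrimitiveRoot ζ d := Complex.isPrimitiveRoot_exp_ofReal_two_pi_div_mul_I (by omega)
  have hζint : IsIntegral ℚ ζ := (hζ.isIntegral (by omega)).tower_top
  have hx : algebraMap ℝ ℂ (2 * cos (2 * π / d)) = ζ + ζ⁻¹ :=
    Complex.ofReal_two_mul_cos_eq_exp_add_inv _
  have hζ_notMem : ζ ∉ ℚ⟮ζ + ζ⁻¹⟯ := by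
    have hreal : ℚ⟮ζ + ζ⁻¹⟯ ≤ (⊥ : IntermediateField ℝ ℂ).restrictScalars ℚ :=
      adjoin_simple_le_iff.2 (mem_bot.2 ⟨_, hx⟩)
    intro hmem
    obtain ⟨r, hr⟩ := mem_bot.1 (hreal hmem)
    have him := congrArg Complex.im hr
    rw [Complex.exp_ofReal_mul_I_im, Complex.coe_algebraMap, Complex.ofReal_im] at him
    exact (sin_pos_of_pos_of_lt_pi hangle.1 hangle.2).ne him
  rw [← minpoly.algebraMap_eq (algebraMap ℝ ℂ).injective, hx,
    ← adjoin.finrank (hζint.add hζint.inv),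
    ← finrank_adjoin_simple_eq_finrank_adjoin_add_inv_mul_two hζint hζ_notMem, adjoin.finrank hζint,
    ← cyclotomic_eq_minpoly_rat hζ (by omega), natDegree_cyclotomic]

theorem minpoly_two_mul_cos_two_pi_div_dvd_dirichletKernel {d m : ℕ} (hd : 2 ≤ d)
    (h : d ∣ 2 * m + 1) : minpoly ℚ (2 * cos (2 * π / d)) ∣ dirichletKernel ℚ m :=
  minpoly.dvd ℚ _ ((aeval_dirichletKernel_eq_zero_iff hd m).2 h)

theorem dvd_of_aeval_minpoly_two_mul_cos_two_pi_div_eq_zero {d e : ℕ} (hd : Odd d) (hd₁ : 1 < d)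
    (he : 2 ≤ e) (h : aeval (2 * cos (2 * π / e)) (minpoly ℚ (2 * cos (2 * π / d))) = 0) :
    e ∣ d := by
  obtain ⟨k, rfl⟩ := hd
  exact (aeval_dirichletKernel_eq_zero_iff he k).1 <| aeval_eq_zero_of_dvd_aeval_eq_zero
    (minpoly_two_mul_cos_two_pi_div_dvd_dirichletKernel hd₁ dvd_rfl) h

theorem isCoprime_minpoly_two_mul_cos_two_pi_div {d e : ℕ} (hd : Odd d) (he : Odd e)
    (hd₁ : 1 < d) (he₁ : 1 < e) (hne : d ≠ e) :
    IsCoprime (minpoly ℚ (2 * cos (2 * π / d))) (minpoly ℚ (2 * cos (2 * π / e))) := by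
  have hirr_d := minpoly.irreducible (isIntegral_two_mul_cos_two_pi_div (d := d) (by omega))
  have hirr_e := minpoly.irreducible (isIntegral_two_mul_cos_two_pi_div (d := e) (by omega))
  refine hirr_d.coprime_iff_not_dvd.2 fun hdvd => hne (Nat.dvd_antisymm ?_ ?_)
  · exact dvd_of_aeval_minpoly_two_mul_cos_two_pi_div_eq_zero he he₁ (by omega) <|
      aeval_eq_zero_of_dvd_aeval_eq_zero hdvd (minpoly.aeval ℚ _)
  · exact dvd_of_aeval_minpoly_two_mul_cos_two_pi_div_eq_zero hd hd₁ (by omega) <|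
      aeval_eq_zero_of_dvd_aeval_eq_zero (hirr_d.dvd_symm hirr_e hdvd) (minpoly.aeval ℚ _)

theorem Nat.sum_totient_filter_one_lt (n : ℕ) :
    ∑ d ∈ n.divisors with 1 < d, d.totient = n - 1 := by
  rcases Nat.eq_zero_or_pos n with rfl | hn
  · simp
  have hfilter : n.divisors.filter (1 < ·) = n.divisors.erase 1 := by
    rw [← Finset.filter_ne']
    refine Finset.filter_congr fun d hd => ?_
    have := Nat.pos_of_mem_divisors hd
    omega
  have := Finset.add_sum_erase n.divisors Nat.totient (Nat.one_mem_divisors.2 hn.ne')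
  rw [Nat.sum_totient, Nat.totient_one] at this
  rw [hfilter]
  omega

open Real Polynomial in
theorem stmt_18_general (n : ℕ) (hodd : Odd n) (m : ℕ) (hm : m = (n - 1) / 2) :
    (1 : ℚ[X]) + ∑ j ∈ Finset.Icc 1 m,
        2 * (Polynomial.Chebyshev.T ℚ j).comp (Polynomial.C (1/2 : ℚ) * Polynomial.X) =
      ∏ d ∈ n.divisors.filter (fun d => 1 < d),
        minpoly ℚ (2 * Real.cos (2 * π / d)) := by
  have hnm : n = 2 * m + 1 := by obtain ⟨k, rfl⟩ := hodd; omega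
  have hs : ∀ d ∈ n.divisors.filter (fun d => 1 < d), d ∣ 2 * m + 1 ∧ Odd d ∧ 1 < d := by
    intro d hd
    obtain ⟨hdn, hd₁⟩ := Finset.mem_filter.1 hd
    have hdvd := Nat.dvd_of_mem_divisors hdn
    exact ⟨hnm ▸ hdvd, hodd.of_dvd_nat hdvd, hd₁⟩
  simp_rw [one_div, ← invOf_eq_inv, ← Chebyshev.C_eq_two_mul_T_comp_half_mul_X]
  change dirichletKernel ℚ m = _
  obtain ⟨hPmonic, hPdeg⟩ := monic_dirichletKernel_and_natDegree ℚ m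
  have hmonic : ∀ d ∈ n.divisors.filter (fun d => 1 < d),
      (minpoly ℚ (2 * Real.cos (2 * π / d))).Monic :=
    fun d hd => minpoly.monic <| isIntegral_two_mul_cos_two_pi_div (by linarith [(hs d hd).2.2])
  refine eq_of_monic_of_dvd_of_natDegree_le (monic_prod_of_monic _ _ hmonic) hPmonic
    (Finset.prod_dvd_of_coprime ?_ ?_) ?_
  · intro d hd e he hne
    exact isCoprime_minpoly_two_mul_cos_two_pi_div (hs d hd).2.1 (hs e he).2.1 (hs d hd).2.2
      (hs e he).2.2 hne
  · exact fun d hd => minpoly_two_mul_cos_two_pi_div_dvd_dirichletKernel (hs d hd).2.2 (hs d hd).1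
  · have hdeg : ∀ d ∈ n.divisors.filter (fun d => 1 < d),
        (minpoly ℚ (2 * Real.cos (2 * π / d))).natDegree * 2 = d.totient := fun d hd =>
      natDegree_minpoly_two_mul_cos_two_pi_div_mul_two (by
        obtain ⟨_, ⟨k, rfl⟩, h⟩ := hs d hd; omega)
    have := Nat.sum_totient_filter_one_lt n
    rw [← Finset.sum_congr rfl hdeg, ← Finset.sum_mul] at this
    rw [natDegree_prod_of_monic _ _ hmonic, hPdeg]
    omega

open Real Polynomial in
/-- Let `n ≥ 3` be odd and `m = (n-1)/2`. Then, as polynomials over `ℚ`,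
`P_m(s) = ∏_{d ∣ n, d > 1} Ψ_d(s)`, where `P_m(s) = 1 + Σ_{j=1}^m 2·T_j(s/2)` with `T_j`
the Chebyshev polynomials of the first kind, and `Ψ_d` is the minimal polynomial over
`ℚ` of `2·cos(2π/d)`. -/
theorem stmt_18 (n : ℕ) (hn : 3 ≤ n) (hodd : Odd n) (m : ℕ) (hm : m = (n - 1) / 2) :
    (1 : ℚ[X]) + ∑ j ∈ Finset.Icc 1 m,
        2 * (Polynomial.Chebyshev.T ℚ j).comp (Polynomial.C (1/2 : ℚ) * Polynomial.X) =
      ∏ d ∈ n.divisors.filter (fun d => 1 < d),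
        minpoly ℚ (2 * Real.cos (2 * π / d)) :=
  stmt_18_general n hodd m hm
end
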